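/- Funk parabola of type 3: let y₀ ∈ (−1,1), F = (f₀,g₀) ∈ B², and let P = (x,y) ∈ B² with y ≠ y₀ and P ≠ F. Put ȳ = 1 − sgn(y₀−y)·y, σ₃ = 1 − sgn(y₀−y)·y₀, A = 2σ₃·g₀·sgn(y₀−y), B = −2σ₃·f₀, C = 2σ₃·(1 − sgn(y₀−y)·g₀), D = σ₃²·(f₀² + g₀² − 1). Then d_F(F,P) = ln ρ(y,y₀) holds if and only if ȳ⁴ + x²·ȳ² − 2ȳ³ + A·ȳ² + B·x·ȳ + C·ȳ + D = 0. -/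

import Mathlib

/-- The Funk distance on the open unit ball of Euclidean n-space:
`d_F(P,Q) = ln((√k − ⟨P, Q−P⟩)/(√k − ⟨Q, Q−P⟩))` with
`k = ⟨P, Q−P⟩² + (1 − ‖P‖²)‖Q−P‖²`. -/
noncomputable def funkDist {n : ℕ} (P Q : EuclideanSpace ℝ (Fin n)) : ℝ :=
  Real.log
    ((Real.sqrt ((inner ℝ P (Q - P) : ℝ) ^ 2 + (1 - ‖P‖ ^ 2) * ‖Q - P‖ ^ 2) - (inner ℝ P (Q - P) : ℝ)) /
     (Real.sqrt ((inner ℝ P (Q - P) : ℝ) ^ 2 + (1 - ‖P‖ ^ 2) * ‖Q - P‖ ^ 2) - (inner ℝ Q (Q - P) : ℝ)))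

/-- `ρ(ε,η) = (1 + sgn(ε−η)·ε)/(1 + sgn(ε−η)·η)`. -/
noncomputable def rho (ε η : ℝ) : ℝ :=
  (1 + Real.sign (ε - η) * ε) / (1 + Real.sign (ε - η) * η)

/-- The point `(a,b)` of the Euclidean plane. -/
def pt (a b : ℝ) : EuclideanSpace ℝ (Fin 2) := WithLp.toLp 2 ![a, b]


/-! Along the ray from `F` through `P`, the Funk distance is the logarithm of a ratio of two
distances to the unit circle; equating it with `ln ρ(y, y₀) = ln (ȳ / σ₃)` and clearing the square
root `√k` leaves a polynomial equation, which factors as `‖P − F‖²` times the stated quartic. -/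

open Real

lemma inner_pt_pt (a b c d : ℝ) : (inner ℝ (pt a b) (pt c d) : ℝ) = a * c + b * d := by
  simp [pt, PiLp.inner_apply, Fin.sum_univ_two]
  ring

lemma pt_sub_pt (a b c d : ℝ) : pt a b - pt c d = pt (a - c) (b - d) := by
  ext i
  fin_cases i <;> simp [pt]

lemma norm_pt_sq (a b : ℝ) : ‖pt a b‖ ^ 2 = a ^ 2 + b ^ 2 := by
  rw [← real_inner_self_eq_norm_sq, inner_pt_pt]
  ring

lemma log_sub_div_sub_eq_log_div_iff {a b r σ τ : ℝ} (ha : |a| < r) (hb : |b| < r) (hab : a ≤ b)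
    (hσ : 0 < σ) (hστ : σ < τ) :
    log ((r - a) / (r - b)) = log (τ / σ) ↔ (τ * b - σ * a) ^ 2 = (τ - σ) ^ 2 * r ^ 2 := by
  obtain ⟨har, har'⟩ := abs_lt.mp ha
  obtain ⟨hbr, hbr'⟩ := abs_lt.mp hb
  have hrb : r - b ≠ 0 := by linarith
  calc log ((r - a) / (r - b)) = log (τ / σ)
      ↔ (r - a) / (r - b) = τ / σ :=
        log_injOn_pos.eq_iff (div_pos (sub_pos.mpr har') (sub_pos.mpr hbr'))
          (div_pos (hσ.trans hστ) hσ)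
    _ ↔ τ * b - σ * a = (τ - σ) * r := by
        rw [div_eq_div_iff hrb hσ.ne']
        constructor <;> intro h <;> linear_combination h
    _ ↔ (τ * b - σ * a) ^ 2 = (τ - σ) ^ 2 * r ^ 2 := by
        rw [← mul_pow, sq_eq_sq_iff_eq_or_eq_neg, iff_self_or]
        -- `τ (b + r) > σ (b + r) ≥ σ (a + r)` rules out the negative root
        intro h
        nlinarith [mul_lt_mul_of_pos_right hστ (by linarith : 0 < b + r)]

lemma funkDist_eq_log_div_iff {n : ℕ} {P Q : EuclideanSpace ℝ (Fin n)} (hP : ‖P‖ < 1)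
    (hQ : ‖Q‖ < 1) (hPQ : P ≠ Q) {σ τ : ℝ} (hσ : 0 < σ) (hστ : σ < τ) :
    funkDist P Q = log (τ / σ) ↔
      (τ * inner ℝ Q (Q - P) - σ * inner ℝ P (Q - P)) ^ 2 =
        (τ - σ) ^ 2 * ((inner ℝ P (Q - P) : ℝ) ^ 2 + (1 - ‖P‖ ^ 2) * ‖Q - P‖ ^ 2) := by
  set a : ℝ := inner ℝ P (Q - P)
  set b : ℝ := inner ℝ Q (Q - P)
  set k := a ^ 2 + (1 - ‖P‖ ^ 2) * ‖Q - P‖ ^ 2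
  have hv : 0 < ‖Q - P‖ ^ 2 := by positivity [sub_ne_zero.mpr hPQ.symm]
  have hba : b - a = ‖Q - P‖ ^ 2 := by
    rw [← inner_sub_left, real_inner_self_eq_norm_sq]
  have hkb : k - b ^ 2 = (1 - ‖Q‖ ^ 2) * ‖Q - P‖ ^ 2 := by
    have hQP : ‖Q‖ ^ 2 = ‖P‖ ^ 2 + a + b := by
      simp only [a, b, ← real_inner_self_eq_norm_sq, inner_sub_right, real_inner_comm P Q]
      ring
    linear_combination (-(a + b)) * hba + ‖Q - P‖ ^ 2 * hQP
  have hPv : 0 < (1 - ‖P‖ ^ 2) * ‖Q - P‖ ^ 2 := mul_pos (by nlinarith [norm_nonneg P]) hv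
  have hQv : 0 < (1 - ‖Q‖ ^ 2) * ‖Q - P‖ ^ 2 := mul_pos (by nlinarith [norm_nonneg Q]) hv
  have hk : 0 ≤ k := by positivity
  have hsq : ∀ c, c ^ 2 < k → |c| < √k := fun c hc =>
    abs_lt_of_sq_lt_sq (by rwa [sq_sqrt hk]) (sqrt_nonneg k)
  have ha : |a| < √k := hsq a (by linarith)
  have hb : |b| < √k := hsq b (by linarith)
  rw [funkDist, log_sub_div_sub_eq_log_div_iff ha hb (by linarith) hσ hστ, sq_sqrt hk]

lemma funk_parabola_factorization (x y f₀ g₀ y₀ s : ℝ) (hs : s = 1 ∨ s = -1) :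
    let a := f₀ * (x - f₀) + g₀ * (y - g₀)
    let b := x * (x - f₀) + y * (y - g₀)
    let Y := 1 - s * y
    let σ := 1 - s * y₀
    (Y * b - σ * a) ^ 2 - (Y - σ) ^ 2 * (a ^ 2 + (1 - (f₀ ^ 2 + g₀ ^ 2)) *
        ((x - f₀) ^ 2 + (y - g₀) ^ 2)) =
      ((x - f₀) ^ 2 + (y - g₀) ^ 2) * (Y ^ 4 + x ^ 2 * Y ^ 2 - 2 * Y ^ 3
        + 2 * σ * g₀ * s * Y ^ 2 + (-2 * σ * f₀) * x * Y + 2 * σ * (1 - s * g₀) * Y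
        + σ ^ 2 * (f₀ ^ 2 + g₀ ^ 2 - 1)) := by
  rcases hs with rfl | rfl <;> ring

/-- Type-3 Funk parabola: `d_F(F,P) = d_F(P,s) = ln ρ(y,y₀)` iff the quartic
`ȳ⁴ + x²ȳ² − 2ȳ³ + Aȳ² + Bxȳ + Cȳ + D = 0` holds, where `ȳ = 1 − sgn(y₀−y)·y`. -/
theorem funk_parabola_stmt15 (y₀ f₀ g₀ x y s σ₃ A B C D Ybar : ℝ)
    (hy₀ : -1 < y₀ ∧ y₀ < 1) (hF : ‖pt f₀ g₀‖ < 1) (hP : ‖pt x y‖ < 1)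
    (hyy : y ≠ y₀) (hne : pt x y ≠ pt f₀ g₀)
    (hs : s = Real.sign (y₀ - y)) (hY : Ybar = 1 - s * y) (hσ : σ₃ = 1 - s * y₀)
    (hA : A = 2 * σ₃ * g₀ * s) (hB : B = -2 * σ₃ * f₀)
    (hC : C = 2 * σ₃ * (1 - s * g₀)) (hD : D = σ₃ ^ 2 * (f₀ ^ 2 + g₀ ^ 2 - 1)) :
    funkDist (pt f₀ g₀) (pt x y) = Real.log (rho y y₀) ↔
      Ybar ^ 4 + x ^ 2 * Ybar ^ 2 - 2 * Ybar ^ 3 + A * Ybar ^ 2 + B * x * Ybar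
        + C * Ybar + D = 0 := by
  have hy : y₀ - y ≠ 0 := sub_ne_zero.mpr hyy.symm
  have hs₁ : s = 1 ∨ s = -1 := hs ▸ (Real.sign_apply_eq_of_ne_zero _ hy).symm
  have hσ₃ : 0 < σ₃ := by rcases hs₁ with rfl | rfl <;> linarith
  have hYσ : σ₃ < Ybar := by linarith [hs ▸ Real.sign_mul_pos_of_ne_zero _ hy]
  have hρ : rho y y₀ = Ybar / σ₃ := by
    rw [rho, ← neg_sub y₀ y, Real.sign_neg, ← hs, hY, hσ]
    ring_nf
  have hv : 0 < (x - f₀) ^ 2 + (y - g₀) ^ 2 := by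
    rw [← norm_pt_sq, ← pt_sub_pt]
    positivity [sub_ne_zero.mpr hne]
  rw [hρ, funkDist_eq_log_div_iff hF hP hne.symm hσ₃ hYσ, pt_sub_pt, inner_pt_pt, inner_pt_pt,
    norm_pt_sq, norm_pt_sq, ← sub_eq_zero, hY, hσ, funk_parabola_factorization x y f₀ g₀ y₀ s hs₁,
    ← hY, ← hσ, ← hA, ← hB, ← hC, ← hD]
  exact ⟨fun h => (mul_eq_zero.mp h).resolve_left hv.ne', fun h => by rw [h, mul_zero]⟩
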